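/- arXiv:1004.1960 — 7 statements merged into one kernel-verified Lean document; each statement's English description precedes it below -/
import Mathlib

section
/- Let K be an infinite field of characteristic different from 2, and for a ∈ K let f_a(X) = X⁴ − aX³ − 6X² + aX + 1 ∈ K[X]. For a fixed a ∈ K with a² + 16 ≠ 0, the set of b ∈ K such that the splitting field of f_b over K (inside a fixed algebraic closure of K) equals the splitting field of f_a over K is infinite. -/
open Polynomial

/-- The simplest quartic polynomial `X^4 - a*X^3 - 6*X^2 + a*X + 1`. -/
noncomputable def simplestQuartic {K : Type*} [Field K] (a : K) : K[X] :=
  X ^ 4 - C a * X ^ 3 - 6 * X ^ 2 + C a * X + 1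

/-- The splitting field of `p` over `K` inside a fixed algebraic closure of `K`. -/
noncomputable def splittingFieldIn (K : Type*) [Field K] (p : K[X]) :
    IntermediateField K (AlgebraicClosure K) :=
  IntermediateField.adjoin K (p.rootSet (AlgebraicClosure K))

open IntermediateField

lemma simplestQuartic_natDegree {K : Type*} [Field K] (c : K) :
    (simplestQuartic c).natDegree = 4 := by
  unfold simplestQuartic
  compute_degree!

lemma simplestQuartic_degree {K : Type*} [Field K] (c : K) :
    (simplestQuartic c).degree = 4 := by
  unfold simplestQuartic
  compute_degree!

lemma simplestQuartic_ne_zero {K : Type*} [Field K] (c : K) :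
    simplestQuartic c ≠ 0 := by
  have h := simplestQuartic_natDegree c
  intro h0
  simp [h0] at h

lemma aeval_simplestQuartic {K L : Type*} [Field K] [Field L] [Algebra K L] (c : K) (x : L) :
    aeval x (simplestQuartic c) =
      x ^ 4 - algebraMap K L c * x ^ 3 - 6 * x ^ 2 + algebraMap K L c * x + 1 := by
  simp [simplestQuartic, map_ofNat]

lemma eval_simplestQuartic {K : Type*} [Field K] (c x : K) :
    eval x (simplestQuartic c) = x ^ 4 - c * x ^ 3 - 6 * x ^ 2 + c * x + 1 := by
  simp [simplestQuartic]

/-- All roots of the simplest quartic are Möbius images of a fixed root. -/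
lemma quartic_root_cases {F : Type*} [Field F] (h2 : (2 : F) ≠ 0) {c θ x : F}
    (hθ : θ ^ 4 - c * θ ^ 3 - 6 * θ ^ 2 + c * θ + 1 = 0)
    (hx : x ^ 4 - c * x ^ 3 - 6 * x ^ 2 + c * x + 1 = 0) :
    x = θ ∨ x = -θ⁻¹ ∨ x = (θ - 1) / (θ + 1) ∨ x = -((θ + 1) / (θ - 1)) := by
  have h4 : (4 : F) ≠ 0 := by
    have := mul_ne_zero h2 h2
    norm_num at this
    exact_mod_cast this
  have hθ0 : θ ≠ 0 := by
    rintro rfl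
    norm_num at hθ
  have hθ1 : θ - 1 ≠ 0 := by
    rw [sub_ne_zero]
    rintro rfl
    exact h4 (by linear_combination -hθ)
  have hθm1 : θ + 1 ≠ 0 := by
    intro h
    have : θ = -1 := by linear_combination h
    subst this
    exact h4 (by linear_combination -hθ)
  have key : (x - θ) * (θ * x + 1) * ((θ + 1) * x - (θ - 1)) * ((θ - 1) * x + (θ + 1)) = 0 := by
    linear_combination (θ ^ 3 - θ) * hx - (x ^ 3 - x) * hθ
  rcases mul_eq_zero.1 key with h | h
  · rcases mul_eq_zero.1 h with h | h
    · rcases mul_eq_zero.1 h with h | h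
      · left; exact sub_eq_zero.1 h
      · right; left
        field_simp
        linear_combination h
    · right; right; left
      rw [eq_div_iff hθm1]
      linear_combination h
  · right; right; right
    rw [eq_comm, neg_eq_iff_eq_neg, eq_comm, eq_div_iff hθ1]
    linear_combination -h
  
/-- The splitting field of a simplest quartic is generated by any single root. -/
lemma splittingIn_eq_adjoin_root {K : Type*} [Field K] (h2 : (2 : K) ≠ 0) (c : K)
    (θ : AlgebraicClosure K) (hθ : aeval θ (simplestQuartic c) = 0) :
    splittingFieldIn K (simplestQuartic c) = K⟮θ⟯ := by
  have hne : simplestQuartic c ≠ 0 := simplestQuartic_ne_zero c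
  have h2' : (2 : AlgebraicClosure K) ≠ 0 := by
    intro h
    apply h2
    apply (algebraMap K (AlgebraicClosure K)).injective
    rw [map_zero, map_ofNat]
    exact h
  have hθ' : θ ^ 4 - algebraMap K (AlgebraicClosure K) c * θ ^ 3 - 6 * θ ^ 2 +
      algebraMap K (AlgebraicClosure K) c * θ + 1 = 0 := by
    rw [aeval_simplestQuartic] at hθ; exact hθ
  apply le_antisymm
  · rw [splittingFieldIn, IntermediateField.adjoin_le_iff]
    intro x hx
    rw [Polynomial.mem_rootSet] at hx
    have hx' : x ^ 4 - algebraMap K (AlgebraicClosure K) c * x ^ 3 - 6 * x ^ 2 +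
        algebraMap K (AlgebraicClosure K) c * x + 1 = 0 := by
      have := hx.2
      rw [aeval_simplestQuartic] at this; exact this
    have hmem : θ ∈ K⟮θ⟯ := IntermediateField.mem_adjoin_simple_self K θ
    rcases quartic_root_cases h2' hθ' hx' with h | h | h | h <;> rw [h]
    · exact hmem
    · exact neg_mem (inv_mem hmem)
    · exact div_mem (sub_mem hmem (one_mem _)) (add_mem hmem (one_mem _))
    · exact neg_mem (div_mem (add_mem hmem (one_mem _)) (sub_mem hmem (one_mem _)))
  · rw [IntermediateField.adjoin_simple_le_iff]
    exact IntermediateField.subset_adjoin _ _ (Polynomial.mem_rootSet.2 ⟨hne, hθ⟩)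

/-- Key algebraic identity: the Möbius transform of a root of `f_a` is a root of `f_b`. -/
lemma key_root {F : Type*} [Field F] (a t θ : F)
    (hθ : θ ^ 4 - a * θ ^ 3 - 6 * θ ^ 2 + a * θ + 1 = 0)
    (hD : θ + t ≠ 0)
    (hDb : a * (t ^ 3 - t) + t ^ 4 - 6 * t ^ 2 + 1 ≠ 0) :
    ((t * θ - 1) / (θ + t)) ^ 4 -
      ((a * (t ^ 4 - 6 * t ^ 2 + 1) - 16 * (t ^ 3 - t)) /
        (a * (t ^ 3 - t) + t ^ 4 - 6 * t ^ 2 + 1)) * ((t * θ - 1) / (θ + t)) ^ 3 -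
      6 * ((t * θ - 1) / (θ + t)) ^ 2 +
      ((a * (t ^ 4 - 6 * t ^ 2 + 1) - 16 * (t ^ 3 - t)) /
        (a * (t ^ 3 - t) + t ^ 4 - 6 * t ^ 2 + 1)) * ((t * θ - 1) / (θ + t)) + 1 = 0 := by
  set u : F := (t * θ - 1) / (θ + t) with hu
  set B : F := (a * (t ^ 4 - 6 * t ^ 2 + 1) - 16 * (t ^ 3 - t)) /
        (a * (t ^ 3 - t) + t ^ 4 - 6 * t ^ 2 + 1) with hB
  have R1 : u * (θ + t) = t * θ - 1 := div_mul_cancel₀ _ hD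
  have R2 : B * (a * (t ^ 3 - t) + t ^ 4 - 6 * t ^ 2 + 1) =
      a * (t ^ 4 - 6 * t ^ 2 + 1) - 16 * (t ^ 3 - t) := div_mul_cancel₀ _ hDb
  have hD4 : (θ + t) ^ 4 * (a * (t ^ 3 - t) + t ^ 4 - 6 * t ^ 2 + 1) ≠ 0 :=
    mul_ne_zero (pow_ne_zero _ hD) hDb
  have hQD : (u ^ 4 - B * u ^ 3 - 6 * u ^ 2 + B * u + 1) *
      ((θ + t) ^ 4 * (a * (t ^ 3 - t) + t ^ 4 - 6 * t ^ 2 + 1)) = 0 := by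
    linear_combination ((1)*θ^4*u + (-1)*θ^4*u^3 + (4)*t*θ^3*u + (-4)*t*θ^3*u^3 + (6)*t^2*θ^2*u + (-6)*t^2*θ^2*u^3 + (4)*t^3*θ*u + (-4)*t^3*θ*u^3 + (1)*t^4*u + (-1)*t^4*u^3) * R2 + ((-1) + (1)*θ*u + (6)*θ^2 + (-1)*θ^2*u^2 + (-6)*θ^3*u + (1)*θ^3*u^3 + (1)*t*u + (-1)*t*θ + (-2)*t*θ*u^2 + (-4)*t*θ^2*u + (3)*t*θ^2*u^3 + (10)*t*θ^3 + (-15)*t*θ^3*u^2 + (-4)*t^2 + (-1)*t^2*u^2 + (6)*t^2*θ*u + (3)*t^2*θ*u^3 + (29)*t^2*θ^2 + (-40)*t^2*θ^2*u^2 + (21)*t^2*θ^3*u + (-6)*t^2*θ^3*u^3 + (4)*t^3*u + (1)*t^3*u^3 + (-35)*t^3*θ*u^2 + (73)*t^3*θ^2*u + (-18)*t^3*θ^2*u^3 + (5)*t^3*θ^3 + (10)*t^3*θ^3*u^2 + (-5)*t^4 + (-10)*t^4*u^2 + (73)*t^4*θ*u + (-18)*t^4*θ*u^3 + (35)*t^4*θ^2*u^2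 + (4)*t^4*θ^3*u + (1)*t^4*θ^3*u^3 + (21)*t^5*u + (-6)*t^5*u^3 + (-29)*t^5*θ + (40)*t^5*θ*u^2 + (6)*t^5*θ^2*u + (3)*t^5*θ^2*u^3 + (4)*t^5*θ^3 + (1)*t^5*θ^3*u^2 + (-10)*t^6 + (15)*t^6*u^2 + (-4)*t^6*θ*u + (3)*t^6*θ*u^3 + (1)*t^6*θ^2 + (2)*t^6*θ^2*u^2 + (1)*t^6*θ^3*u + (-6)*t^7*u + (1)*t^7*u^3 + (-6)*t^7*θ + (1)*t^7*θ*u^2 + (1)*t^7*θ^2*u + (1)*t^7*θ^3 + (-1)*a*θ + (1)*a*θ^2*u + (1)*a*θ^3 + (-1)*a*θ^3*u^2 + (1)*a*t*θ*u + (-1)*a*t*θ^2 + (-2)*a*t*θ^2*u^2 + (5)*a*t*θ^3*u + (-1)*a*t*θ^3*u^3 + (-4)*a*t^2*θ + (-1)*a*t^2*θ*u^2 + (12)*a*t^2*θ^2*u + (-3)*a*t^2*θ^2*u^3 + (-1)*a*t^2*θ^3 + (5)*a*t^2*θ^3*u^2 + (8)*a*t^3*θ*u + (-3)*a*t^3*θ*u^3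 + (-10)*a*t^3*θ^2 + (15)*a*t^3*θ^2*u^2 + (-1)*a*t^3*θ^3*u + (1)*a*t^3*θ^3*u^3 + (1)*a*t^4*u + (-1)*a*t^4*u^3 + (-10)*a*t^4*θ + (15)*a*t^4*θ*u^2 + (-8)*a*t^4*θ^2*u + (3)*a*t^4*θ^2*u^3 + (-1)*a*t^5 + (5)*a*t^5*u^2 + (-12)*a*t^5*θ*u + (3)*a*t^5*θ*u^3 + (-4)*a*t^5*θ^2 + (-1)*a*t^5*θ^2*u^2 + (-5)*a*t^6*u + (1)*a*t^6*u^3 + (-1)*a*t^6*θ + (-2)*a*t^6*θ*u^2 + (-1)*a*t^6*θ^2*u + (1)*a*t^7 + (-1)*a*t^7*u^2 + (-1)*a*t^7*θ*u + (-1)*a*t^7*θ^2) * R1 + (1 + t ^ 2) ^ 4 * hθ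
  exact (mul_eq_zero.1 hQD).resolve_right hD4

theorem simplest_quartic_infinitely_many_same_splitting_field
    {K : Type*} [Field K] [Infinite K] (h2 : (2 : K) ≠ 0)
    (a : K) (ha : a ^ 2 + 16 ≠ 0) :
    {b : K | splittingFieldIn K (simplestQuartic b) =
      splittingFieldIn K (simplestQuartic a)}.Infinite := by
  classical
  set i := algebraMap K (AlgebraicClosure K) with hi_def
  have hi : Function.Injective i := i.injective
  -- a root of f_a in the algebraic closure
  obtain ⟨θ, hθroot⟩ : ∃ θ : AlgebraicClosure K, aeval θ (simplestQuartic a) = 0 := by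
    have hdeg : ((simplestQuartic a).map i).degree ≠ 0 := by
      rw [degree_map, simplestQuartic_degree]
      norm_num
    obtain ⟨x, hx⟩ := IsAlgClosed.exists_root ((simplestQuartic a).map i) hdeg
    exact ⟨x, by rwa [aeval_def, ← eval_map]⟩
  have hθ : θ ^ 4 - i a * θ ^ 3 - 6 * θ ^ 2 + i a * θ + 1 = 0 := by
    rw [aeval_simplestQuartic] at hθroot; exact hθroot
  -- the set of excluded parameters
  set Bad : Set K :=
    {t | t ^ 2 + 1 = 0} ∪ {t | eval t (simplestQuartic (-a)) = 0} ∪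
      {(0 : K), 1, -1} ∪ {t | i t = -θ} with hBad_def
  have hBadFin : Bad.Finite := by
    rw [hBad_def]
    refine ((Set.Finite.union (Set.Finite.union ?_ ?_) ?_).union ?_)
    · have hne : ((X : K[X]) ^ 2 + 1) ≠ 0 := by
        intro h
        have hdeg : ((X : K[X]) ^ 2 + 1).natDegree = 2 := by compute_degree!
        simp [h] at hdeg
      have := Polynomial.finite_setOf_isRoot hne
      refine this.subset ?_
      intro t ht
      simp only [Set.mem_setOf_eq] at ht ⊢
      simp [IsRoot, ht]
    · exact Polynomial.finite_setOf_isRoot (simplestQuartic_ne_zero (-a))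
    · exact (Set.finite_singleton _).insert _ |>.insert _
    · exact Set.Finite.preimage hi.injOn (Set.finite_singleton (-θ))
  -- facts available for good parameters
  have hfacts : ∀ t : K, t ∉ Bad →
      (t ^ 2 + 1 ≠ 0) ∧ (a * (t ^ 3 - t) + t ^ 4 - 6 * t ^ 2 + 1 ≠ 0) ∧
      t ≠ 0 ∧ t ≠ 1 ∧ t ≠ -1 ∧ θ + i t ≠ 0 := by
    intro t ht
    rw [hBad_def] at ht
    simp only [Set.mem_union, Set.mem_setOf_eq, Set.mem_insert_iff,
      Set.mem_singleton_iff, not_or] at ht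
    obtain ⟨⟨⟨h1, hq⟩, h0, hone, hmone⟩, h4⟩ := ht
    refine ⟨h1, ?_, h0, hone, hmone, ?_⟩
    · intro h
      apply hq
      rw [eval_simplestQuartic]
      linear_combination h
    · intro h
      exact h4 (by linear_combination h)
  -- the parameter map
  set b : K → K := fun t =>
    (a * (t ^ 4 - 6 * t ^ 2 + 1) - 16 * (t ^ 3 - t)) /
      (a * (t ^ 3 - t) + t ^ 4 - 6 * t ^ 2 + 1) with hb_def
  -- each good parameter lands in the target set
  have hmem : ∀ t : K, t ∉ Bad → b t ∈ {b : K | splittingFieldIn K (simplestQuartic b) =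
      splittingFieldIn K (simplestQuartic a)} := by
    intro t ht
    obtain ⟨ht2, hDbK, ht0, ht1, htm1, hDθ⟩ := hfacts t ht
    have hDb' : i a * ((i t) ^ 3 - i t) + (i t) ^ 4 - 6 * (i t) ^ 2 + 1 ≠ 0 := by
      intro h
      apply hDbK
      apply hi
      rw [map_zero]
      rw [map_add, map_sub, map_add, map_mul, map_sub, map_pow, map_pow, map_mul,
        map_ofNat, map_pow, map_one]
      exact h
    have hbt : i (b t) =
        (i a * ((i t) ^ 4 - 6 * (i t) ^ 2 + 1) - 16 * ((i t) ^ 3 - i t)) /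
          (i a * ((i t) ^ 3 - i t) + (i t) ^ 4 - 6 * (i t) ^ 2 + 1) := by
      rw [hb_def]
      simp only [map_div₀, map_sub, map_add, map_mul, map_pow, map_one, map_ofNat]
    set θ' : AlgebraicClosure K := (i t * θ - 1) / (θ + i t) with hθ'_def
    have hθ'root : aeval θ' (simplestQuartic (b t)) = 0 := by
      rw [aeval_simplestQuartic, hbt, hθ'_def]
      exact key_root (i a) (i t) θ hθ hDθ hDb'
    show splittingFieldIn K (simplestQuartic (b t)) = splittingFieldIn K (simplestQuartic a)
    rw [splittingIn_eq_adjoin_root h2 (b t) θ' hθ'root,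
      splittingIn_eq_adjoin_root h2 a θ hθroot]
    have hmul : θ' * (θ + i t) = i t * θ - 1 := by
      rw [hθ'_def]; exact div_mul_cancel₀ _ hDθ
    apply le_antisymm
    · rw [IntermediateField.adjoin_simple_le_iff]
      have hm : θ ∈ K⟮θ⟯ := IntermediateField.mem_adjoin_simple_self K θ
      rw [hθ'_def]
      exact div_mem (sub_mem (mul_mem (K⟮θ⟯.algebraMap_mem t) hm) (one_mem _))
        (add_mem hm (K⟮θ⟯.algebraMap_mem t))
    · rw [IntermediateField.adjoin_simple_le_iff]
      have ht2' : (i t) ^ 2 + 1 ≠ 0 := by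
        intro h
        apply ht2
        apply hi
        rw [map_zero, map_add, map_pow, map_one]
        exact h
      have hne : θ' - i t ≠ 0 := by
        intro h
        apply ht2'
        have h' : θ' = i t := by linear_combination h
        rw [h'] at hmul
        linear_combination hmul
      have hform : θ = -(i t * θ' + 1) / (θ' - i t) := by
        rw [eq_div_iff hne]
        linear_combination hmul
      rw [hform]
      have hm : θ' ∈ K⟮θ'⟯ := IntermediateField.mem_adjoin_simple_self K θ'
      exact div_mem (neg_mem (add_mem (mul_mem (K⟮θ'⟯.algebraMap_mem t) hm) (one_mem _)))
        (sub_mem hm (K⟮θ'⟯.algebraMap_mem t))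
  -- infinitude
  by_contra hfin
  rw [Set.not_infinite] at hfin
  have hTinf : Badᶜ.Infinite := hBadFin.infinite_compl
  apply hTinf
  have hsub : Badᶜ ⊆ ⋃ s ∈ {b : K | splittingFieldIn K (simplestQuartic b) =
      splittingFieldIn K (simplestQuartic a)}, {t | t ∈ Badᶜ ∧ b t = s} := by
    intro t ht
    exact Set.mem_biUnion (hmem t ht) ⟨ht, rfl⟩
  refine Set.Finite.subset (Set.Finite.biUnion hfin ?_) hsub
  intro s _
  by_cases hsa : s = a
  · refine Set.Finite.subset Set.finite_empty ?_
    rintro t ⟨htB, hbt⟩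
    exfalso
    obtain ⟨ht2, hDbK, ht0, ht1, htm1, hDθ⟩ := hfacts t htB
    rw [hsa] at hbt
    rw [hb_def] at hbt
    have hcl := (div_eq_iff hDbK).1 hbt
    have ht3 : t ^ 3 - t ≠ 0 := by
      intro h
      have h' : t * (t - 1) * (t + 1) = 0 := by linear_combination h
      rcases mul_eq_zero.1 h' with h'' | h''
      · rcases mul_eq_zero.1 h'' with h3 | h3
        · exact ht0 h3
        · exact ht1 (by linear_combination h3)
      · exact htm1 (by linear_combination h'')
    apply ha
    have h16 : (a ^ 2 + 16) * (t ^ 3 - t) = 0 := by linear_combination -hcl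
    exact (mul_eq_zero.1 h16).resolve_right ht3
  · have has : a - s ≠ 0 := sub_ne_zero.2 fun h => hsa h.symm
    refine Set.Finite.subset
      (Polynomial.finite_setOf_isRoot (simplestQuartic_ne_zero ((16 + a * s) / (a - s)))) ?_
    rintro t ⟨htB, hbt⟩
    obtain ⟨ht2, hDbK, ht0, ht1, htm1, hDθ⟩ := hfacts t htB
    rw [hb_def] at hbt
    have hcl := (div_eq_iff hDbK).1 hbt
    show (simplestQuartic ((16 + a * s) / (a - s))).IsRoot t
    rw [IsRoot, eval_simplestQuartic]
    have key2 : (t ^ 4 - 6 * t ^ 2 + 1) * (a - s) = (16 + a * s) * (t ^ 3 - t) := by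
      linear_combination hcl
    field_simp
    linear_combination key2
end

section
/- For m ∈ ℤ, the polynomial f_m(X) = X⁴ − mX³ − 6X² + mX + 1 is irreducible over ℚ if and only if m ∉ {0, 3, −3}. Moreover, f_3(X) = (X² + X − 1)(X² − 4X − 1), f_{−3}(X) = (X² − X − 1)(X² + 4X − 1), and f_0(X) = (X² + 2X − 1)(X² − 2X − 1). -/
open Polynomial

/-- The binary quartic form `F_m(x, y) = x^4 - m*x^3*y - 6*x^2*y^2 + m*x*y^3 + y^4`. -/
def Fq (m x y : ℤ) : ℤ := x ^ 4 - m * x ^ 3 * y - 6 * x ^ 2 * y ^ 2 + m * x * y ^ 3 + y ^ 4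

/-- `L_m`: the splitting field of the simplest quartic polynomial `f_m` over `ℚ`
inside a fixed algebraic closure of `ℚ`. -/
noncomputable def Lq (m : ℤ) : IntermediateField ℚ (AlgebraicClosure ℚ) :=
  splittingFieldIn ℚ (simplestQuartic (m : ℚ))

/-! ### Auxiliary results over `ℤ` -/

/-- The integral model of the simplest quartic polynomial. -/
noncomputable def fZ (m : ℤ) : ℤ[X] := X ^ 4 - C m * X ^ 3 - 6 * X ^ 2 + C m * X + 1

lemma fZ_coeff (m : ℤ) : (fZ m).coeff 0 = 1 ∧ (fZ m).coeff 1 = m ∧ (fZ m).coeff 2 = -6 ∧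
    (fZ m).coeff 3 = -m ∧ (fZ m).coeff 4 = 1 := by
  unfold fZ
  refine ⟨?_, ?_, ?_, ?_, ?_⟩ <;>
  · simp only [coeff_add, coeff_sub, coeff_C_mul, coeff_ofNat_mul, coeff_one, coeff_X_pow, coeff_X]
    norm_num

lemma fZ_monic (m : ℤ) : (fZ m).Monic := by unfold fZ; monicity!

lemma fZ_natDegree (m : ℤ) : (fZ m).natDegree = 4 := by unfold fZ; compute_degree!

lemma no_linear (m : ℤ) (g h : ℤ[X]) (hg : g.Monic) (hh : h.Monic)
    (hdg : g.natDegree = 1) (hdh : h.natDegree = 3) (hf : fZ m = g * h) : False := by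
  obtain ⟨c0, c1, c2, c3, -⟩ := fZ_coeff m
  have key : ∀ n, (fZ m).coeff n = ∑ i ∈ Finset.range (n+1), g.coeff i * h.coeff (n - i) :=
    fun n => by rw [hf, coeff_mul, Finset.Nat.sum_antidiagonal_eq_sum_range_succ_mk]
  have hg1 : g.coeff 1 = 1 := by have := hg.coeff_natDegree; rwa [hdg] at this
  have hh3 : h.coeff 3 = 1 := by have := hh.coeff_natDegree; rwa [hdh] at this
  have hg2 : g.coeff 2 = 0 := coeff_eq_zero_of_natDegree_lt (by omega)
  have hg3 : g.coeff 3 = 0 := coeff_eq_zero_of_natDegree_lt (by omega)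
  have e0 := key 0; have e1 := key 1; have e2 := key 2; have e3 := key 3
  simp only [Finset.sum_range_succ, Finset.sum_range_zero, c0, c1, c2, c3,
    hg1, hh3, hg2, hg3, zero_add, zero_mul, mul_zero, add_zero, one_mul, mul_one] at e0 e1 e2 e3
  norm_num at e0 e1 e2 e3
  rcases Int.mul_eq_one_iff_eq_one_or_neg_one.1 e0.symm with ⟨ha, hb⟩|⟨ha, hb⟩ <;>
    simp only [ha, hb] at e1 e2 e3 <;> omega

lemma no_quad (m : ℤ) (hm : m ≠ 0) (hm3 : m ≠ 3) (hm3' : m ≠ -3) (g h : ℤ[X])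
    (hg : g.Monic) (hh : h.Monic)
    (hdg : g.natDegree = 2) (hdh : h.natDegree = 2) (hf : fZ m = g * h) : False := by
  obtain ⟨c0, c1, c2, c3, -⟩ := fZ_coeff m
  have key : ∀ n, (fZ m).coeff n = ∑ i ∈ Finset.range (n+1), g.coeff i * h.coeff (n - i) :=
    fun n => by rw [hf, coeff_mul, Finset.Nat.sum_antidiagonal_eq_sum_range_succ_mk]
  have hg2 : g.coeff 2 = 1 := by have := hg.coeff_natDegree; rwa [hdg] at this
  have hh2 : h.coeff 2 = 1 := by have := hh.coeff_natDegree; rwa [hdh] at this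
  have hg3 : g.coeff 3 = 0 := coeff_eq_zero_of_natDegree_lt (by omega)
  have hh3 : h.coeff 3 = 0 := coeff_eq_zero_of_natDegree_lt (by omega)
  have e0 := key 0; have e1 := key 1; have e2 := key 2; have e3 := key 3
  simp only [Finset.sum_range_succ, Finset.sum_range_zero, c0, c1, c2, c3,
    hg2, hh2, hg3, hh3, zero_add, zero_mul, mul_zero, add_zero, one_mul, mul_one] at e0 e1 e2 e3
  norm_num at e0 e1 e2 e3
  rcases Int.mul_eq_one_iff_eq_one_or_neg_one.1 e0.symm with ⟨ha, hb⟩|⟨ha, hb⟩ <;>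
    simp only [ha, hb] at e1 e2 e3
  · omega
  · set a := g.coeff 1 with hA
    set b := h.coeff 1 with hB
    have hab : a * b = -4 := by linarith
    have ha0 : a ≠ 0 := by intro h0; rw [h0, zero_mul] at hab; norm_num at hab
    have hdvd : a ∣ 4 := ⟨-b, by rw [mul_neg, hab]; norm_num⟩
    have hdvd' : -a ∣ 4 := (neg_dvd).mpr hdvd
    have hr : a ≤ 4 := Int.le_of_dvd (by norm_num) hdvd
    have hl : -4 ≤ a := by have := Int.le_of_dvd (by norm_num : (0:ℤ) < 4) hdvd'; omega
    interval_cases a <;> omega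

lemma fZ_irred (m : ℤ) (hm : m ≠ 0) (hm3 : m ≠ 3) (hm3' : m ≠ -3) : Irreducible (fZ m) := by
  have hmon := fZ_monic m
  have aux : ∀ g h : ℤ[X], fZ m = g * h → g.Monic → h.Monic → IsUnit g ∨ IsUnit h := by
    intro g h hf hg hh
    by_contra hcon
    push_neg at hcon
    obtain ⟨hgu, hhu⟩ := hcon
    have hdeg : g.natDegree + h.natDegree = 4 := by
      rw [← natDegree_mul hg.ne_zero hh.ne_zero, ← hf, fZ_natDegree]
    have hg0 : g.natDegree ≠ 0 := fun e => hgu (hg.natDegree_eq_zero.mp e ▸ isUnit_one)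
    have hh0 : h.natDegree ≠ 0 := fun e => hhu (hh.natDegree_eq_zero.mp e ▸ isUnit_one)
    have : g.natDegree = 1 ∨ g.natDegree = 2 ∨ g.natDegree = 3 := by omega
    rcases this with h1 | h2 | h3
    · exact no_linear m g h hg hh h1 (by omega) hf
    · exact no_quad m hm hm3 hm3' g h hg hh h2 (by omega) hf
    · exact no_linear m h g hh hg (by omega) h3 (by rw [hf, mul_comm])
  constructor
  · intro hu
    have := natDegree_eq_zero_of_isUnit hu
    rw [fZ_natDegree] at this; exact absurd this (by norm_num)
  · intro g h hf
    have hlc : g.leadingCoeff * h.leadingCoeff = 1 := by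
      rw [← leadingCoeff_mul, ← hf]; exact hmon
    rcases Int.mul_eq_one_iff_eq_one_or_neg_one.1 hlc with ⟨ha, hb⟩ | ⟨ha, hb⟩
    · exact aux g h hf ha hb
    · have := aux (-g) (-h) (by rw [hf]; ring)
        (by rwa [Monic, leadingCoeff_neg, neg_eq_iff_eq_neg])
        (by rwa [Monic, leadingCoeff_neg, neg_eq_iff_eq_neg])
      rcases this with h1 | h1
      · exact Or.inl (by simpa using h1.neg)
      · exact Or.inr (by simpa using h1.neg)

/-! ### Transfer to `ℚ` -/

lemma map_fZ (m : ℤ) : simplestQuartic ((m : ℤ) : ℚ) = (fZ m).map (Int.castRingHom ℚ) := by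
  unfold simplestQuartic fZ
  simp [Polynomial.map_add, Polynomial.map_sub, Polynomial.map_mul, Polynomial.map_pow,
    Polynomial.map_ofNat, Polynomial.map_one, map_C]

lemma fact3 : simplestQuartic ((3 : ℤ) : ℚ) = (X ^ 2 + X - 1) * (X ^ 2 - 4 * X - 1) := by
  unfold simplestQuartic
  push_cast
  simp only [map_neg, map_zero, map_ofNat]
  ring

lemma factn3 : simplestQuartic ((-3 : ℤ) : ℚ) = (X ^ 2 - X - 1) * (X ^ 2 + 4 * X - 1) := by
  unfold simplestQuartic
  push_cast
  simp only [map_neg, map_zero, map_ofNat]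
  ring

lemma fact0 : simplestQuartic ((0 : ℤ) : ℚ) = (X ^ 2 + 2 * X - 1) * (X ^ 2 - 2 * X - 1) := by
  unfold simplestQuartic
  push_cast
  simp only [map_neg, map_zero, map_ofNat]
  ring

lemma not_unit_of_deg2 (p : ℚ[X]) (hp : p.natDegree = 2) : ¬ IsUnit p := fun hu => by
  have := natDegree_eq_zero_of_isUnit hu; omega

theorem simplest_quartic_irreducible_iff_and_reducible_factorizations :
    (∀ m : ℤ, Irreducible (simplestQuartic (m : ℚ)) ↔ m ∉ ({0, 3, -3} : Set ℤ)) ∧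
    simplestQuartic ((3 : ℤ) : ℚ) = (X ^ 2 + X - 1) * (X ^ 2 - 4 * X - 1) ∧
    simplestQuartic ((-3 : ℤ) : ℚ) = (X ^ 2 - X - 1) * (X ^ 2 + 4 * X - 1) ∧
    simplestQuartic ((0 : ℤ) : ℚ) = (X ^ 2 + 2 * X - 1) * (X ^ 2 - 2 * X - 1) := by
  refine ⟨fun m => ⟨?_, ?_⟩, fact3, factn3, fact0⟩
  · intro hirr hm
    simp only [Set.mem_insert_iff, Set.mem_singleton_iff] at hm
    rcases hm with rfl | rfl | rfl
    · rw [fact0] at hirr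
      rcases hirr.isUnit_or_isUnit rfl with h | h
      · exact not_unit_of_deg2 _ (by compute_degree!) h
      · exact not_unit_of_deg2 _ (by compute_degree!) h
    · rw [fact3] at hirr
      rcases hirr.isUnit_or_isUnit rfl with h | h
      · exact not_unit_of_deg2 _ (by compute_degree!) h
      · exact not_unit_of_deg2 _ (by compute_degree!) h
    · rw [factn3] at hirr
      rcases hirr.isUnit_or_isUnit rfl with h | h
      · exact not_unit_of_deg2 _ (by compute_degree!) h
      · exact not_unit_of_deg2 _ (by compute_degree!) h
  · intro hm
    simp only [Set.mem_insert_iff, Set.mem_singleton_iff, not_or] at hm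
    obtain ⟨h0, h3, h3'⟩ := hm
    rw [map_fZ]
    exact (IsPrimitive.Int.irreducible_iff_irreducible_map_cast
      (fZ_monic m).isPrimitive).mp (fZ_irred m h0 h3 h3')
end

section
/- Let m ∈ ℤ with m ∉ {0, 3, −3}, and let L_m denote the splitting field of f_m(X) = X⁴ − mX³ − 6X² + mX + 1 over ℚ inside a fixed algebraic closure of ℚ. Suppose x, y ∈ ℤ satisfy xy(x + y)(x − y) ≠ 0 and F_m(x, y) divides 4(m² + 16), where F_m(X, Y) = X⁴ − mX³Y − 6X²Y² + mXY³ + Y⁴. Then F_m(x, y) divides (m² + 16)·xy(x + y)(x − y), the integer N := m + (m² + 16)·xy(x + y)(x − y)/F_m(x, y) satisfies N ≠ m and N ≠ −m, and L_N = L_m. -/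
/-!
With `T = x y (x + y) (x - y)` and `N F_m(x, y) = m F_m(x, y) + (m² + 16) T`, one has the identity
`F_m(x u - y v, y u + x v) = F_m(x, y) F_N(u, v)`: the Möbius map `β ↦ (x β - y) / (y β + x)` sends
roots of `f_N` to roots of `f_m`. Its inverse `α ↦ (x α + y) / (x - y α)` is of the same shape with
`y` replaced by `-y` and the roles of `m` and `N` exchanged, so each splitting field contains the
other. The denominators never vanish because `F_j` has no nontrivial integer zero: at coprime `p, q`
a zero would give `p ∣ q⁴` and `q ∣ p⁴`, so `p, q = ±1`, where `F_j = -4`.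

`F_m(x, y)` divides `(m² + 16) T` because either `x ≡ y (mod 2)`, and then `4 ∣ T`, or `F_m(x, y)` is
odd. Finally `N = -m` would make `(2x² - mxy - 2y²)(8xy + m(x² - y²))` vanish, and either factor
vanishing makes `m² + 16` a square, i.e. `m ∈ {0, ±3}`.
-/

open Polynomial

section Form

variable {R : Type*} [CommRing R]

def simplestQuarticForm (a u v : R) : R :=
  u ^ 4 - a * u ^ 3 * v - 6 * u ^ 2 * v ^ 2 + a * u * v ^ 3 + v ^ 4

theorem Fq_eq_simplestQuarticForm (m x y : ℤ) : Fq m x y = simplestQuarticForm m x y := rfl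

theorem map_simplestQuarticForm {S : Type*} [CommRing S] (f : R →+* S) (a u v : R) :
    f (simplestQuarticForm a u v) = simplestQuarticForm (f a) (f u) (f v) := by
  simp [simplestQuarticForm, map_ofNat]

theorem simplestQuarticForm_mul_mul (a t u v : R) :
    simplestQuarticForm a (t * u) (t * v) = t ^ 4 * simplestQuarticForm a u v := by
  unfold simplestQuarticForm; ring

theorem simplestQuarticForm_div_one {K : Type*} [Field K] (a u : K) {v : K} (hv : v ≠ 0) :
    simplestQuarticForm a (u / v) 1 = simplestQuarticForm a u v / v ^ 4 := by
  rw [eq_div_iff (pow_ne_zero 4 hv), mul_comm, ← simplestQuarticForm_mul_mul, mul_div_cancel₀ u hv,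
    mul_one]

/-- `f_b` is the transform of `f_a` under `X ↦ (x X - y) / (y X + x)`,
see `simplestQuarticForm_twist`. -/
def IsSimplestQuarticTwist (a b x y : R) : Prop :=
  b * simplestQuarticForm a x y =
    a * simplestQuarticForm a x y + (a ^ 2 + 16) * (x * y * (x + y) * (x - y))

theorem IsSimplestQuarticTwist.map {S : Type*} [CommRing S] (f : R →+* S) {a b x y : R}
    (h : IsSimplestQuarticTwist a b x y) : IsSimplestQuarticTwist (f a) (f b) (f x) (f y) := by
  simpa [IsSimplestQuarticTwist, map_simplestQuarticForm, map_ofNat] using congrArg f h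

theorem simplestQuarticForm_twist {a b x y : R} (h : IsSimplestQuarticTwist a b x y) (u v : R) :
    simplestQuarticForm a (x * u - y * v) (y * u + x * v) =
      simplestQuarticForm a x y * simplestQuarticForm b u v := by
  unfold IsSimplestQuarticTwist at h
  unfold simplestQuarticForm at *
  linear_combination (u ^ 3 * v - u * v ^ 3) * h

theorem simplestQuarticForm_twist_inv {a b x y : R} (h : IsSimplestQuarticTwist a b x y) (u v : R) :
    simplestQuarticForm a x y * simplestQuarticForm b (x * u + y * v) (x * v - y * u) =
      (x ^ 2 + y ^ 2) ^ 4 * simplestQuarticForm a u v := by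
  rw [← simplestQuarticForm_twist h, ← simplestQuarticForm_mul_mul]
  congr 1 <;> ring

theorem IsSimplestQuarticTwist.symm [IsDomain R] [CharZero R] {a b x y : R}
    (h : IsSimplestQuarticTwist a b x y) (hF : simplestQuarticForm a x y ≠ 0) :
    IsSimplestQuarticTwist b a x (-y) := by
  -- the twisted form is determined by its values at `(1, 0)` and `(2, 1)`
  have h10 := simplestQuarticForm_twist_inv h 1 0
  have h21 := simplestQuarticForm_twist_inv h 2 1
  have key : 6 * simplestQuarticForm a x y * (a * simplestQuarticForm b x (-y) -
      (b * simplestQuarticForm b x (-y) + (b ^ 2 + 16) * (x * -y * (x + -y) * (x - -y)))) = 0 := by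
    unfold simplestQuarticForm at *
    linear_combination h21 + (7 + 6 * a) * h10
  exact sub_eq_zero.1 ((mul_eq_zero.1 key).resolve_left (mul_ne_zero (by norm_num) hF))

end Form

theorem Fq_ne_zero_of_isCoprime (j : ℤ) {p q : ℤ} (h : IsCoprime p q) : Fq j p q ≠ 0 := by
  intro h0
  have hp : IsUnit p := (h.pow_right (n := 4)).isUnit_of_dvd' dvd_rfl
    ⟨-p ^ 3 + j * p ^ 2 * q + 6 * p * q ^ 2 - j * q ^ 3, by unfold Fq at h0; linear_combination h0⟩
  have hq : IsUnit q := (h.pow_left (m := 4)).isUnit_of_dvd'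
    ⟨j * p ^ 3 + 6 * p ^ 2 * q - j * p * q ^ 2 - q ^ 3, by unfold Fq at h0; linear_combination h0⟩
    dvd_rfl
  rcases Int.isUnit_iff.1 hp with rfl | rfl <;> rcases Int.isUnit_iff.1 hq with rfl | rfl <;>
    simp only [Fq] at h0 <;> linarith

theorem Fq_ne_zero (j : ℤ) {p q : ℤ} (h : p ≠ 0 ∨ q ≠ 0) : Fq j p q ≠ 0 := by
  obtain ⟨g, p, q, hg, hpq, rfl, rfl⟩ := Int.exists_gcd_one' (Int.gcd_pos_iff.2 h)
  rw [Fq_eq_simplestQuarticForm, mul_comm p, mul_comm q, simplestQuarticForm_mul_mul]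
  exact mul_ne_zero (by positivity) (Fq_ne_zero_of_isCoprime j (Int.isCoprime_iff_gcd_eq_one.2 hpq))

section Roots

variable {K : Type*} [Field K]

theorem simplestQuartic_ne_zero_s8 (a : K) : simplestQuartic a ≠ 0 := by
  intro h
  simpa [simplestQuartic] using congrArg (eval 0) h

theorem aeval_simplestQuartic_s8 {A : Type*} [CommRing A] [Algebra K A] (a : K) (β : A) :
    aeval β (simplestQuartic a) = simplestQuarticForm (algebraMap K A a) β 1 := by
  simp [simplestQuartic, simplestQuarticForm, map_ofNat]

theorem mem_rootSet_simplestQuartic {A : Type*} [CommRing A] [IsDomain A] [Algebra K A] (a : K)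
    {β : A} : β ∈ (simplestQuartic a).rootSet A ↔ simplestQuarticForm (algebraMap K A a) β 1 = 0 := by
  rw [mem_rootSet, aeval_simplestQuartic_s8, and_iff_right (simplestQuartic_ne_zero_s8 a)]

theorem simplestQuarticForm_twist_div_eq_zero {a b x y β : K} (h : IsSimplestQuarticTwist a b x y)
    (hβ : simplestQuarticForm b β 1 = 0) (hv : y * β + x ≠ 0) :
    simplestQuarticForm a ((x * β - y) / (y * β + x)) 1 = 0 := by
  have := simplestQuarticForm_twist h β 1
  simp only [mul_one] at this
  rw [simplestQuarticForm_div_one _ _ hv, this, hβ, mul_zero, zero_div]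

theorem intCast_mul_add_intCast_ne_zero [CharZero K] (j : ℤ) {p q : ℤ} (h : p ≠ 0 ∨ q ≠ 0) {β : K}
    (hβ : simplestQuarticForm (j : K) β 1 = 0) : (q : K) * β + p ≠ 0 := by
  intro h0
  have hcast : ((Fq j (-p) q : ℤ) : K) = (q : K) ^ 4 * simplestQuarticForm (j : K) β 1 := by
    rw [← simplestQuarticForm_mul_mul, mul_one, show (q : K) * β = -p by linear_combination h0]
    push_cast [Fq, simplestQuarticForm]
    ring
  rw [hβ, mul_zero] at hcast
  exact Fq_ne_zero j (p := -p) (q := q) (by rwa [neg_ne_zero]) (by exact_mod_cast hcast)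

end Roots

theorem Lq_le_Lq_of_isSimplestQuarticTwist {a b x y : ℤ} (hy : y ≠ 0)
    (h : IsSimplestQuarticTwist a b x y) : Lq b ≤ Lq a := by
  let K := AlgebraicClosure ℚ
  have hK : IsSimplestQuarticTwist (a : K) b x y := by simpa using h.map (Int.castRingHom K)
  refine IntermediateField.adjoin_le_iff.2 fun β hβ => ?_
  rw [mem_rootSet_simplestQuartic, map_intCast] at hβ
  have hβv : (y : K) * β + x ≠ 0 := intCast_mul_add_intCast_ne_zero b (Or.inr hy) hβ
  set α := ((x : K) * β - y) / (y * β + x)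
  have hα : simplestQuarticForm (a : K) α 1 = 0 := simplestQuarticForm_twist_div_eq_zero hK hβ hβv
  have hαv : (x : K) - y * α ≠ 0 := fun h0 =>
    intCast_mul_add_intCast_ne_zero a (p := x) (q := -y) (Or.inr (neg_ne_zero.2 hy)) hα
      (by push_cast; linear_combination h0)
  have hβα : β = (x * α + y) / (x - y * α) := by
    rw [eq_div_iff hαv]
    linear_combination -(div_mul_cancel₀ ((x : K) * β - y) hβv)
  have hαL : α ∈ Lq a := IntermediateField.subset_adjoin _ _ <| by
    rwa [mem_rootSet_simplestQuartic, map_intCast]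
  rw [hβα]
  exact div_mem (add_mem (mul_mem (intCast_mem _ x) hαL) (intCast_mem _ y))
    (sub_mem (intCast_mem _ x) (mul_mem (intCast_mem _ y) hαL))

theorem Lq_eq_Lq_of_isSimplestQuarticTwist {a b x y : ℤ} (hy : y ≠ 0) (hF : Fq a x y ≠ 0)
    (h : IsSimplestQuarticTwist a b x y) : Lq b = Lq a :=
  le_antisymm (Lq_le_Lq_of_isSimplestQuarticTwist hy h)
    (Lq_le_Lq_of_isSimplestQuarticTwist (neg_ne_zero.2 hy) (h.symm hF))

theorem four_dvd_of_even_add {x y : ℤ} (h : Even (x + y)) : 4 ∣ x * y * (x + y) * (x - y) := by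
  obtain ⟨k, hk⟩ := h
  exact ⟨x * y * k * (k - y), by linear_combination x * y * (x - y + 2 * k) * hk⟩

theorem odd_Fq_of_odd_add (m : ℤ) {x y : ℤ} (h : Odd (x + y)) : Odd (Fq m x y) := by
  simp only [Fq, Int.odd_add, Int.odd_sub, Int.odd_pow, Int.even_mul, Int.even_pow, ne_eq,
    OfNat.ofNat_ne_zero, not_false_eq_true, and_true, or_false] at h ⊢
  tauto

theorem Fq_dvd_mul_of_dvd_four_mul {m x y e : ℤ} (h : Fq m x y ∣ 4 * e) :
    Fq m x y ∣ e * (x * y * (x + y) * (x - y)) := by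
  rcases Int.even_or_odd (x + y) with heven | hodd
  · exact h.trans (by rw [mul_comm 4 e]; exact mul_dvd_mul_left e (four_dvd_of_even_add heven))
  · have hcop : IsCoprime (Fq m x y) (2 ^ 2) :=
      (Int.isCoprime_two_right.2 (odd_Fq_of_odd_add m hodd)).pow_right
    exact (hcop.dvd_of_dvd_mul_left (by simpa using h)).mul_right _

theorem isSquare_of_sq_eq_mul_sq {u v d : ℤ} (hv : v ≠ 0) (h : u ^ 2 = d * v ^ 2) : IsSquare d := by
  rw [← Rat.isSquare_intCast_iff]
  refine ⟨u / v, ?_⟩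
  field_simp
  exact_mod_cast h.symm

theorem mem_of_isSquare_sq_add_sixteen {m : ℤ} (h : IsSquare (m ^ 2 + 16)) :
    m ∈ ({0, 3, -3} : Set ℤ) := by
  obtain ⟨s, hs⟩ := h
  have h16 : (|s| - |m|) * (|s| - |m| + 2 * |m|) = 16 := by
    linear_combination sq_abs s - sq_abs m - hs
  have hk : 0 < |s| - |m| :=
    pos_of_mul_pos_left (by rw [h16]; norm_num) (by linarith [abs_nonneg s, abs_nonneg m])
  have hk4 : |s| - |m| ≤ 4 := by nlinarith [abs_nonneg m]
  have hm : |m| = 0 ∨ |m| = 3 := by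
    generalize |s| - |m| = k at h16 hk hk4
    interval_cases k <;> omega
  simp only [Set.mem_insert_iff, Set.mem_singleton_iff]
  rcases hm with hm | hm
  · exact Or.inl (abs_eq_zero.1 hm)
  · exact Or.inr ((abs_eq (by norm_num)).1 hm)

theorem isSquare_sq_add_sixteen_of_isSimplestQuarticTwist_neg {m x y : ℤ} (hx : x ≠ 0)
    (hy : y ≠ 0) (h : IsSimplestQuarticTwist m (-m) x y) : IsSquare (m ^ 2 + 16) := by
  have hfac : (2 * x ^ 2 - m * x * y - 2 * y ^ 2) * (8 * x * y + m * (x ^ 2 - y ^ 2)) = 0 := by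
    unfold IsSimplestQuarticTwist simplestQuarticForm at h
    linear_combination -h
  rcases mul_eq_zero.1 hfac with h1 | h2
  · exact isSquare_of_sq_eq_mul_sq (u := 4 * x - m * y) hy (by linear_combination 8 * h1)
  · exact isSquare_of_sq_eq_mul_sq (u := m * y - 4 * x) hx (by linear_combination -m * h2)

theorem simplest_quartic_same_splitting_field_of_thue_solution
    (m : ℤ) (hm : m ∉ ({0, 3, -3} : Set ℤ)) (x y : ℤ)
    (hxy : x * y * (x + y) * (x - y) ≠ 0)
    (hdvd : Fq m x y ∣ 4 * (m ^ 2 + 16)) :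
    Fq m x y ∣ (m ^ 2 + 16) * (x * y * (x + y) * (x - y)) ∧
    m + (m ^ 2 + 16) * (x * y * (x + y) * (x - y)) / Fq m x y ≠ m ∧
    m + (m ^ 2 + 16) * (x * y * (x + y) * (x - y)) / Fq m x y ≠ -m ∧
    Lq (m + (m ^ 2 + 16) * (x * y * (x + y) * (x - y)) / Fq m x y) = Lq m := by
  have hx : x ≠ 0 := by rintro rfl; simp at hxy
  have hy : y ≠ 0 := by rintro rfl; simp at hxy
  have hdvdT := Fq_dvd_mul_of_dvd_four_mul hdvd
  set q := (m ^ 2 + 16) * (x * y * (x + y) * (x - y)) / Fq m x y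
  have hq : Fq m x y * q = (m ^ 2 + 16) * (x * y * (x + y) * (x - y)) :=
    Int.mul_ediv_cancel' hdvdT
  have hq0 : q ≠ 0 := by
    rintro h0
    rw [h0, mul_zero] at hq
    exact mul_ne_zero (by positivity) hxy hq.symm
  have htwist : IsSimplestQuarticTwist m (m + q) x y := by
    unfold IsSimplestQuarticTwist
    rw [← Fq_eq_simplestQuarticForm]
    linear_combination hq
  refine ⟨hdvdT, by simpa using hq0, fun hneg => hm ?_,
    Lq_eq_Lq_of_isSimplestQuarticTwist hy (Fq_ne_zero m (p := x) (Or.inr hy)) htwist⟩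
  rw [hneg] at htwist
  exact mem_of_isSquare_sq_add_sixteen
    (isSquare_sq_add_sixteen_of_isSimplestQuarticTwist_neg hx hy htwist)
end

section
/- Let m ∈ ℤ with m ∉ {0, 3, −3} and let n ∈ ℤ with n ≠ m and n ≠ −m. It is not possible that both of the following hold: (a) there exist integers x, y with xy(x + y)(x − y) ≠ 0, F_m(x, y) ≠ 0, and n·F_m(x, y) = m·F_m(x, y) + (m² + 16)·xy(x + y)(x − y); and (b) there exist integers x', y' with x'y'(x' + y')(x' − y') ≠ 0, F_m(x', y') ≠ 0, and (−n)·F_m(x', y') = m·F_m(x', y') + (m² + 16)·x'y'(x' + y')(x' − y'). Here F_m(X, Y) = X⁴ − mX³Y − 6X²Y² + mXY³ + Y⁴. -/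
open Polynomial

set_option maxHeartbeats 1000000
lemma stepA (m n x y : ℤ) (hF : Fq m x y ≠ 0)
    (heq : n * Fq m x y = m * Fq m x y + (m ^ 2 + 16) * (x * y * (x + y) * (x - y))) :
    ∃ k w : ℤ, 0 < k ∧ k ^ 2 = (m ^ 2 + 16) * (n ^ 2 + 16) ∧
      (2 * k * (k + (m * n + 16)) = w ^ 2 ∨ 2 * k * (k - (m * n + 16)) = w ^ 2) := by
  rw [Fq] at heq hF
  have key1 : (n ^ 2 + 16) * (x ^ 4 - m * x ^ 3 * y - 6 * x ^ 2 * y ^ 2 + m * x * y ^ 3 + y ^ 4) ^ 2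
      = (m ^ 2 + 16) * (x ^ 2 + y ^ 2) ^ 4 := by
    linear_combination ((n + m) * (x ^ 4 - m * x ^ 3 * y - 6 * x ^ 2 * y ^ 2 + m * x * y ^ 3 + y ^ 4)
      + (m ^ 2 + 16) * (x * y * (x + y) * (x - y))) * heq
  have hK : (0:ℤ) < (m ^ 2 + 16) * (n ^ 2 + 16) := by positivity
  have hJ : ((m ^ 2 + 16) * (x ^ 2 + y ^ 2) ^ 2) ^ 2 = ((m ^ 2 + 16) * (n ^ 2 + 16)) *
      (x ^ 4 - m * x ^ 3 * y - 6 * x ^ 2 * y ^ 2 + m * x * y ^ 3 + y ^ 4) ^ 2 := by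
    linear_combination (-(m ^ 2 + 16)) * key1
  have hdvd : (x ^ 4 - m * x ^ 3 * y - 6 * x ^ 2 * y ^ 2 + m * x * y ^ 3 + y ^ 4) ∣
      (m ^ 2 + 16) * (x ^ 2 + y ^ 2) ^ 2 :=
    (Int.pow_dvd_pow_iff two_ne_zero).mp ⟨(m ^ 2 + 16) * (n ^ 2 + 16), by linear_combination hJ⟩
  obtain ⟨k₀, hk₀⟩ := hdvd
  have hF2 : (x ^ 4 - m * x ^ 3 * y - 6 * x ^ 2 * y ^ 2 + m * x * y ^ 3 + y ^ 4) ^ 2 ≠ 0 :=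
    pow_ne_zero 2 hF
  have hk₀sq : k₀ ^ 2 = (m ^ 2 + 16) * (n ^ 2 + 16) := by
    apply mul_left_cancel₀ hF2
    rw [hk₀] at hJ; linear_combination hJ
  have hk₀ne : k₀ ≠ 0 := by
    intro h; rw [h] at hk₀sq; nlinarith [hK]
  have key2 : 2 * ((m ^ 2 + 16) * (x ^ 2 + y ^ 2) ^ 2) * ((m ^ 2 + 16) * (x ^ 2 + y ^ 2) ^ 2
        + (m * n + 16) * (x ^ 4 - m * x ^ 3 * y - 6 * x ^ 2 * y ^ 2 + m * x * y ^ 3 + y ^ 4))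
      = (2 * (m ^ 2 + 16) * (x ^ 2 + y ^ 2) * (x ^ 2 - y ^ 2)) ^ 2 := by
    linear_combination (2 * (m ^ 2 + 16) * (x ^ 2 + y ^ 2) ^ 2 * m) * heq
  rw [hk₀] at key2
  have hWdvd : (x ^ 4 - m * x ^ 3 * y - 6 * x ^ 2 * y ^ 2 + m * x * y ^ 3 + y ^ 4) ∣
      2 * (m ^ 2 + 16) * (x ^ 2 + y ^ 2) * (x ^ 2 - y ^ 2) :=
    (Int.pow_dvd_pow_iff two_ne_zero).mp ⟨2 * k₀ * (k₀ + (m * n + 16)), by linear_combination -key2⟩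
  obtain ⟨w, hw⟩ := hWdvd
  have hsq : 2 * k₀ * (k₀ + (m * n + 16)) = w ^ 2 := by
    apply mul_left_cancel₀ hF2
    rw [hw] at key2; linear_combination key2
  rcases hk₀ne.lt_or_gt with hneg | hpos
  · exact ⟨-k₀, w, by omega, by linear_combination hk₀sq, Or.inr (by linear_combination hsq)⟩
  · exact ⟨k₀, w, hpos, hk₀sq, Or.inl hsq⟩

lemma pos_aux (k c e : ℤ) (hk : 0 < k) (he : k ^ 2 - c ^ 2 = 16 * e ^ 2) (he0 : e ≠ 0) :
    0 < k + c := by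
  have h2 : 0 < e ^ 2 := by positivity
  nlinarith [sq_nonneg (k + c), sq_nonneg (k - c)]

lemma flipSq (k c e w : ℤ) (hk : 0 < k) (he : k ^ 2 - c ^ 2 = 16 * e ^ 2) (he0 : e ≠ 0)
    (h : 2 * k * (k - c) = w ^ 2) : ∃ v, 2 * k * (k + c) = v ^ 2 := by
  have hkc : 0 < k - c := by
    have := pos_aux k (-c) e hk (by linear_combination he) he0
    linarith
  have hw : w ≠ 0 := by
    intro h0; rw [h0] at h
    nlinarith [mul_pos (mul_pos (by norm_num : (0:ℤ) < 2) hk) hkc]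
  have hdvd : w ∣ 8 * k * e := by
    refine (Int.pow_dvd_pow_iff two_ne_zero).mp ⟨2 * k * (k + c), ?_⟩
    linear_combination (2 * k * (k + c)) * h - 4 * k ^ 2 * he
  obtain ⟨v, hv⟩ := hdvd
  refine ⟨v, mul_left_cancel₀ (pow_ne_zero 2 hw) ?_⟩
  linear_combination (-(2 * k * (k + c))) * h + 4 * k ^ 2 * he + (8 * k * e + w * v) * hv

theorem simplest_quartic_not_both_signs
    (m : ℤ) (hm : m ∉ ({0, 3, -3} : Set ℤ)) (n : ℤ) (hn : n ≠ m) (hn' : n ≠ -m) :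
    ¬ ((∃ x y : ℤ, x * y * (x + y) * (x - y) ≠ 0 ∧ Fq m x y ≠ 0 ∧
          n * Fq m x y = m * Fq m x y + (m ^ 2 + 16) * (x * y * (x + y) * (x - y))) ∧
        (∃ x y : ℤ, x * y * (x + y) * (x - y) ≠ 0 ∧ Fq m x y ≠ 0 ∧
          (-n) * Fq m x y = m * Fq m x y + (m ^ 2 + 16) * (x * y * (x + y) * (x - y)))) := by
  simp only [Set.mem_insert_iff, Set.mem_singleton_iff, not_or] at hm
  obtain ⟨hm0, hm3, hm3'⟩ := hm
  rintro ⟨⟨x, y, -, hF, heq⟩, ⟨x', y', -, hF', heq'⟩⟩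
  obtain ⟨k1, w1, hk1pos, hk1sq, h1⟩ := stepA m n x y hF heq
  obtain ⟨k2, w2, hk2pos, hk2sq', h2⟩ := stepA m (-n) x' y' hF' heq'
  have hk2sq : k2 ^ 2 = (m ^ 2 + 16) * (n ^ 2 + 16) := by linear_combination hk2sq'
  have hkk : k1 = k2 := by
    have hz : (k1 - k2) * (k1 + k2) = 0 := by linear_combination hk1sq - hk2sq
    rcases mul_eq_zero.mp hz with h | h <;> omega
  subst hkk
  have hnm : n - m ≠ 0 := by omega
  have hnm' : n + m ≠ 0 := by omega
  have hec : k1 ^ 2 - (m * n + 16) ^ 2 = 16 * (n - m) ^ 2 := by linear_combination hk1sq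
  have hed : k1 ^ 2 - (m * n - 16) ^ 2 = 16 * (n + m) ^ 2 := by linear_combination hk1sq
  have hA : ∃ wa, 2 * k1 * (k1 + (m * n + 16)) = wa ^ 2 := by
    rcases h1 with h | h
    · exact ⟨w1, h⟩
    · exact flipSq k1 (m * n + 16) (n - m) w1 hk1pos hec hnm h
  have hB : ∃ wb, 2 * k1 * (k1 + (m * n - 16)) = wb ^ 2 := by
    rcases h2 with h | h
    · exact flipSq k1 (m * n - 16) (n + m) w2 hk1pos hed hnm' (by linear_combination h)
    · exact ⟨w2, by linear_combination h⟩
  obtain ⟨wa, hwa⟩ := hA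
  obtain ⟨wb, hwb⟩ := hB
  have hc : 0 < k1 + (m * n + 16) := pos_aux k1 (m * n + 16) (n - m) hk1pos hec hnm
  have hd : 0 < k1 + (m * n - 16) := pos_aux k1 (m * n - 16) (n + m) hk1pos hed hnm'
  have hprod : 2 * k1 ∣ wa * wb := by
    refine (Int.pow_dvd_pow_iff two_ne_zero).mp
      ⟨(k1 + (m * n + 16)) * (k1 + (m * n - 16)), ?_⟩
    linear_combination (-(2 * k1 * (k1 + (m * n - 16)))) * hwa - wa ^ 2 * hwb
  obtain ⟨v, hv⟩ := hprod
  have hk1ne : (2 * k1) ^ 2 ≠ 0 := by positivity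
  have hvsq : (k1 + (m * n + 16)) * (k1 + (m * n - 16)) = v ^ 2 := by
    apply mul_left_cancel₀ hk1ne
    linear_combination (2 * k1 * (k1 + (m * n - 16))) * hwa + wa ^ 2 * hwb
      + (wa * wb + 2 * k1 * v) * hv
  obtain ⟨u, hudef⟩ : ∃ u : ℤ, u = k1 + m * n := ⟨_, rfl⟩
  have huv : u ^ 2 = |v| ^ 2 + 256 := by rw [sq_abs, hudef]; linear_combination hvsq
  have hu16 : 16 < u := by rw [hudef]; linarith
  have hu : u = 16 ∨ u = 20 ∨ u = 34 ∨ u = 65 := by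
    obtain ⟨a, b, hab, ha, ha16, hsum⟩ :
        ∃ a b : ℤ, a * b = 256 ∧ 0 < a ∧ a ≤ 16 ∧ a + b = 2 * u := by
      refine ⟨u - |v|, u + |v|, by linear_combination huv, ?_, ?_, by ring⟩
      · nlinarith [abs_nonneg v, sq_nonneg (u - |v|)]
      · nlinarith [abs_nonneg v]
    interval_cases a <;> omega
  have huk : k1 + m * n = u := hudef.symm
  rcases hu with hu | hu | hu | hu
  all_goals rw [hu] at huk
  · -- u = 16
    have h0 : 16 * (m + n) ^ 2 = 0 := by
      linear_combination (k1 + 16 - m * n) * huk - hk1sq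
    have h1 : (m + n) ^ 2 = 0 := by linarith
    have := pow_eq_zero_iff (n := 2) (by norm_num) |>.mp h1
    omega
  · -- u = 20
    have h8 : 8 * ((2 * m + n) * (m + 2 * n)) = 8 * 18 := by
      linear_combination (k1 + 20 - m * n) * huk - hk1sq
    have hde : (2 * m + n) * (m + 2 * n) = 18 := mul_left_cancel₀ (by norm_num) h8
    have h3d : (3:ℤ) ∣ (2 * m + n) :=
      Int.prime_three.dvd_of_dvd_pow (n := 2)
        ⟨(2 * m + n) * (m + n) - 6, by linear_combination -hde⟩
    have h3e : (3:ℤ) ∣ (m + 2 * n) :=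
      Int.prime_three.dvd_of_dvd_pow (n := 2)
        ⟨(m + 2 * n) * (m + n) - 6, by linear_combination -hde⟩
    obtain ⟨d₀, hd₀⟩ := h3d
    obtain ⟨e₀, he₀⟩ := h3e
    have hde2 : d₀ * e₀ = 2 := by
      have h9 : 9 * (d₀ * e₀) = 9 * 2 := by rw [hd₀, he₀] at hde; linear_combination hde
      exact mul_left_cancel₀ (by norm_num) h9
    have hdvd2 : d₀ ∣ 2 := ⟨e₀, hde2.symm⟩
    have hle : d₀ ≤ 2 := Int.le_of_dvd (by norm_num) hdvd2
    have hge : -2 ≤ d₀ := by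
      have := Int.le_of_dvd (by norm_num : (0:ℤ) < 2) ((neg_dvd).mpr hdvd2)
      linarith
    interval_cases d₀ <;> omega
  · -- u = 34
    have h4 : 4 * ((4 * m + n) * (m + 4 * n)) = 4 * 225 := by
      linear_combination (k1 + 34 - m * n) * huk - hk1sq
    have hde : (4 * m + n) * (m + 4 * n) = 225 := mul_left_cancel₀ (by norm_num) h4
    have h3d : (3:ℤ) ∣ (4 * m + n) :=
      Int.prime_three.dvd_of_dvd_pow (n := 2)
        ⟨75 + (4 * m + n) * (m - n), by linear_combination hde⟩
    have h5d : (5:ℤ) ∣ (4 * m + n) :=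
      (by norm_num : Prime (5:ℤ)).dvd_of_dvd_pow (n := 2)
        ⟨(4 * m + n) * (m + n) - 45, by linear_combination -hde⟩
    have h3e : (3:ℤ) ∣ (m + 4 * n) :=
      Int.prime_three.dvd_of_dvd_pow (n := 2)
        ⟨75 + (m + 4 * n) * (n - m), by linear_combination hde⟩
    have h5e : (5:ℤ) ∣ (m + 4 * n) :=
      (by norm_num : Prime (5:ℤ)).dvd_of_dvd_pow (n := 2)
        ⟨(m + 4 * n) * (m + n) - 45, by linear_combination -hde⟩
    have h15d : (15:ℤ) ∣ (4 * m + n) := by omega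
    have h15e : (15:ℤ) ∣ (m + 4 * n) := by omega
    obtain ⟨d₀, hd₀⟩ := h15d
    obtain ⟨e₀, he₀⟩ := h15e
    have hde1 : d₀ * e₀ = 1 := by
      have h225 : 225 * (d₀ * e₀) = 225 * 1 := by
        rw [hd₀, he₀] at hde; linear_combination hde
      exact mul_left_cancel₀ (by norm_num) h225
    rcases Int.mul_eq_one_iff_eq_one_or_neg_one.mp hde1 with ⟨h1, h2⟩ | ⟨h1, h2⟩ <;>
      subst h1 <;> subst h2 <;> omega
  · -- u = 65
    have h65 : 16 * m ^ 2 + 130 * (m * n) + 16 * n ^ 2 = 3969 := by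
      linear_combination (k1 + 65 - m * n) * huk - hk1sq
    have h2 : (2:ℤ) ∣ 3969 :=
      ⟨8 * m ^ 2 + 65 * (m * n) + 8 * n ^ 2, by linear_combination -h65⟩
    norm_num at h2
end

section
/- Let m, c ∈ ℤ and F_m(X, Y) = X⁴ − mX³Y − 6X²Y² + mXY³ + Y⁴. If x, y ∈ ℤ satisfy gcd(x, y) = 1, (x, y) ≡ (0, 1) or (1, 0) modulo 2 (i.e., exactly one of x, y is even), and F_m(x, y) = c, then c is odd, and setting x' = x − y, y' = x + y, one has gcd(x', y') = 1, both x' and y' odd, and F_m(x', y') = −4c. -/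
open Polynomial

/-! Modulo 2, `F_m(x, y) ≡ x⁴ + y⁴ + m·xy(x² + y²) ≡ x + y`, so `c` is odd exactly when `x + y` is.
`F_m(x − y, x + y) = −4·F_m(x, y)` is a polynomial identity, and a common divisor of `x − y` and
`x + y` divides `2x` and `2y`, hence `2`, which the oddness of `x − y` rules out. -/

theorem IsCoprime.sub_add {R : Type*} [CommRing R] {x y : R} (h : IsCoprime x y)
    (h2 : IsCoprime (x - y) 2) : IsCoprime (x - y) (x + y) := by
  rw [← IsCoprime.add_mul_left_right_iff (z := 1), show x + y + (x - y) * 1 = 2 * x by ring,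
    IsCoprime.mul_right_iff]
  exact ⟨h2, by simpa [neg_add_eq_sub] using h.symm.neg_left.add_mul_right_left 1⟩

theorem odd_Fq_iff (m x y : ℤ) : Odd (Fq m x y) ↔ Odd (x + y) := by
  simp only [Fq, ← Int.not_even_iff_odd, parity_simps]
  tauto

theorem Fq_sub_add (m x y : ℤ) : Fq m (x - y) (x + y) = -4 * Fq m x y := by
  unfold Fq; ring

theorem simplest_quartic_primitive_solution_transform
    (m c x y : ℤ) (hgcd : Int.gcd x y = 1)
    (hpar : (Even x ∧ Odd y) ∨ (Odd x ∧ Even y))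
    (hF : Fq m x y = c) :
    Odd c ∧ Int.gcd (x - y) (x + y) = 1 ∧ Odd (x - y) ∧ Odd (x + y) ∧
      Fq m (x - y) (x + y) = -4 * c := by
  have hsum : Odd (x + y) := by
    rcases hpar with ⟨hx, hy⟩ | ⟨hx, hy⟩
    · exact hx.add_odd hy
    · exact hx.add_even hy
  have hdiff : Odd (x - y) := Int.odd_sub.2 (Int.odd_add.1 hsum)
  have hcop : IsCoprime (x - y) (x + y) :=
    (Int.isCoprime_iff_gcd_eq_one.2 hgcd).sub_add (Int.isCoprime_two_right.2 hdiff)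
  subst hF
  exact ⟨(odd_Fq_iff m x y).2 hsum, Int.isCoprime_iff_gcd_eq_one.1 hcop, hdiff, hsum,
    Fq_sub_add m x y⟩
end

section
/- Let m, x, y ∈ ℤ with gcd(x, y) = 1, and let F_m(X, Y) = X⁴ − mX³Y − 6X²Y² + mXY³ + Y⁴. If F_m(x, y) divides (m² + 16)·xy(x + y)(x − y), then F_m(x, y) divides 4(m² + 16). -/
open Polynomial

/-!
Put `P = x² - y²`. Then `F_m(x, y) = P² - m x y P - 4 (x y)²`, so modulo `F_m(x, y)` we have
`4 (x y)² ≡ P² - m x y P = (P - m x y) P`. Multiplying by `(m² + 16) x y`, the hypothesis makes the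
right-hand side vanish, hence `F_m(x, y) ∣ 4 (m² + 16) (x y)³`. Since `gcd(x, y) = 1`, the form
`F_m(x, y) ≡ y⁴ (mod x)` and `≡ x⁴ (mod y)` is coprime to `x y`, which can therefore be cancelled.
-/

theorem Fq_swap (m x y : ℤ) : Fq m x y = Fq (-m) y x := by
  unfold Fq; ring

theorem isCoprime_Fq_left {m x y : ℤ} (h : IsCoprime x y) : IsCoprime x (Fq m x y) := by
  have hF : Fq m x y = y ^ 4 + x * (x ^ 3 - m * x ^ 2 * y - 6 * x * y ^ 2 + m * y ^ 3) := by
    unfold Fq; ring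
  rw [hF]
  exact h.pow_right.add_mul_left_right _

theorem isCoprime_Fq_mul {m x y : ℤ} (h : IsCoprime x y) : IsCoprime (Fq m x y) (x * y) := by
  have hy : IsCoprime y (Fq m x y) := Fq_swap m x y ▸ isCoprime_Fq_left h.symm
  exact (isCoprime_Fq_left h).symm.mul_right hy.symm

theorem Fq_dvd_mul_pow_of_dvd {m x y : ℤ}
    (h : Fq m x y ∣ (m ^ 2 + 16) * (x * y * (x + y) * (x - y))) :
    Fq m x y ∣ 4 * (m ^ 2 + 16) * (x * y) ^ 3 := by
  have key : 4 * (m ^ 2 + 16) * (x * y) ^ 3 =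
      (x ^ 2 - y ^ 2 - m * x * y) * ((m ^ 2 + 16) * (x * y * (x + y) * (x - y)))
        - (m ^ 2 + 16) * (x * y) * Fq m x y := by
    unfold Fq; ring
  rw [key]
  exact dvd_sub (h.mul_left _) (dvd_mul_left _ _)

theorem simplest_quartic_dvd_of_dvd
    (m x y : ℤ) (hgcd : Int.gcd x y = 1)
    (h : Fq m x y ∣ (m ^ 2 + 16) * (x * y * (x + y) * (x - y))) :
    Fq m x y ∣ 4 * (m ^ 2 + 16) := by
  have hcop : IsCoprime (Fq m x y) ((x * y) ^ 3) :=
    (isCoprime_Fq_mul (Int.isCoprime_iff_gcd_eq_one.mpr hgcd)).pow_right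
  exact hcop.dvd_of_dvd_mul_right (Fq_dvd_mul_pow_of_dvd h)
end

section
/- Let K be a field of characteristic different from 2 and let z, w ∈ K with z, w ∉ {0, 1, −1} and z ≠ −w. Set a = (z⁴ − 6z² + 1)/(z(z² − 1)) and b = (w⁴ − 6w² + 1)/(w(w² − 1)), and assume a ≠ −b. Set A₂ = (ab − 16)/(a + b) and Θ₂ = (zw − 1)/(z + w). Then Θ₂⁴ − A₂Θ₂³ − 6Θ₂² + A₂Θ₂ + 1 = 0; that is, Θ₂ is a root of the simplest quartic polynomial f_{A₂}(X) = X⁴ − A₂X³ − 6X² + A₂X + 1. -/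
open Polynomial

/-- Auxiliary: clearing denominators for the quartic root identity. -/
theorem simplest_quartic_aux {K : Type*} [Field K] (T S U V : K) (hS : S ≠ 0) (hU : U ≠ 0)
    (key : U*(T^4-6*T^2*S^2+S^4) - V*(T^3*S - T*S^3) = 0) :
    (T/S)^4 - (V/U)*(T/S)^3 - 6*(T/S)^2 + (V/U)*(T/S) + 1 = 0 := by
  set t := T / S with htd
  set v := V / U with hvd
  have ht : t * S = T := div_mul_cancel₀ T hS
  have hv : v * U = V := div_mul_cancel₀ V hU
  have h : (U * S^4) * (t^4 - v*t^3 - 6*t^2 + v*t + 1) = 0 := by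
    linear_combination key
      + (U*T^3 - S*T^2*V - 6*S^2*U*T + S^3*V + t*S*U*T^2 - t*S^2*T*V - 6*t*S^3*U
        + t^2*S^2*U*T - t^2*S^3*V + t^3*S^3*U) * ht
      + (t*S^4 - t^3*S^4) * hv
  have := (mul_eq_zero.mp h).resolve_left (mul_ne_zero hU (pow_ne_zero 4 hS))
  linear_combination this

theorem simplest_quartic_theta_two_is_root
    {K : Type*} [Field K] (h2 : (2 : K) ≠ 0) (z w : K)
    (hz : z ∉ ({0, 1, -1} : Set K)) (hw : w ∉ ({0, 1, -1} : Set K)) (hzw : z ≠ -w)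
    (a b : K)
    (ha : a = (z ^ 4 - 6 * z ^ 2 + 1) / (z * (z ^ 2 - 1)))
    (hb : b = (w ^ 4 - 6 * w ^ 2 + 1) / (w * (w ^ 2 - 1)))
    (hab : a ≠ -b) :
    ((z * w - 1) / (z + w)) ^ 4 - ((a * b - 16) / (a + b)) * ((z * w - 1) / (z + w)) ^ 3
      - 6 * ((z * w - 1) / (z + w)) ^ 2
      + ((a * b - 16) / (a + b)) * ((z * w - 1) / (z + w)) + 1 = 0 := by
  simp only [Set.mem_insert_iff, Set.mem_singleton_iff, not_or] at hz hw
  obtain ⟨hz0, hz1, hz1'⟩ := hz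
  obtain ⟨hw0, hw1, hw1'⟩ := hw
  have hz1 : z - 1 ≠ 0 := sub_ne_zero.mpr hz1
  have hz1' : z + 1 ≠ 0 := fun h => hz1' (by linear_combination h)
  have hw1 : w - 1 ≠ 0 := sub_ne_zero.mpr hw1
  have hw1' : w + 1 ≠ 0 := fun h => hw1' (by linear_combination h)
  have hzw : z + w ≠ 0 := fun h => hzw (by linear_combination h)
  have hS : a + b ≠ 0 := fun h => hab (by linear_combination h)
  have hzd : z * (z ^ 2 - 1) ≠ 0 := by
    have : z * (z ^ 2 - 1) = z * ((z - 1) * (z + 1)) := by ring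
    rw [this]; exact mul_ne_zero hz0 (mul_ne_zero hz1 hz1')
  have hwd : w * (w ^ 2 - 1) ≠ 0 := by
    have : w * (w ^ 2 - 1) = w * ((w - 1) * (w + 1)) := by ring
    rw [this]; exact mul_ne_zero hw0 (mul_ne_zero hw1 hw1')
  rw [eq_div_iff hzd] at ha
  rw [eq_div_iff hwd] at hb
  have Ez : z ^ 4 - a * z ^ 3 - 6 * z ^ 2 + a * z + 1 = 0 := by linear_combination -ha
  have Ew : w ^ 4 - b * w ^ 3 - 6 * w ^ 2 + b * w + 1 = 0 := by linear_combination -hb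
  have key : (a + b) * ((z*w-1)^4 - 6*(z*w-1)^2*(z+w)^2 + (z+w)^4)
      - (a*b - 16) * ((z*w-1)^3*(z+w) - (z*w-1)*(z+w)^3) = 0 := by
    linear_combination (b + a - 16*w + w*a*b - 6*w^2*b - 6*w^2*a + 16*w^3 - w^3*a*b
      + w^4*b + w^4*a) * Ez + (-16*z - z*a^2 + 16*z^3 + z^3*a^2) * Ew
  exact simplest_quartic_aux (z*w-1) (z+w) (a+b) (a*b-16) hzw hS key
end
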